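/- arXiv:2212.00568 — 2 statements merged into one kernel-verified Lean document; each statement's English description precedes it below -/
import Mathlib

section
/- Let g₁,…,g_K be probability densities each of whose support contains supp(φ·f), let α ∈ S_K with α_k > 0, and let g_α = Σ_k α_k g_k. Then for any k, with β* the optimal control parameter for control function g_k under sampling density g_α, Var_{g_α}([φ(X)f(X) − β* g_k(X)]/g_α(X)) ≤ α_k⁻¹ Var_{g_k}(φ(X)f(X)/g_k(X)). -/
open MeasureTheory ProbabilityTheory

/-- The measure with density `g` with respect to `μ`. -/
noncomputable def den {E : Type*} [MeasurableSpace E] (μ : Measure E) (g : E → ℝ) :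
    Measure E :=
  μ.withDensity (fun x => ENNReal.ofReal (g x))

/-- Covariance of two real random variables under a measure. -/
noncomputable def cov {E : Type*} [MeasurableSpace E] (A B : E → ℝ) (ν : Measure E) : ℝ :=
  ∫ x, (A x - ∫ y, A y ∂ν) * (B x - ∫ y, B y ∂ν) ∂ν

/-
Write `g_α = Σ α_i g_i`, `A = φf/g_α`, `B = g_k/g_α` and `m = E_{g_k}[φf/g_k]`. Since `β*` minimises
`β ↦ Var_{g_α}(A - βB)`, the variance is at most `Var_{g_α}(A - mB) ≤ E_{g_α}[(A - mB)²]
= ∫ (φf - m g_k)² / g_α`. Bounding `g_α ≥ α_k g_k` pointwise gives at most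
`α_k⁻¹ ∫ (φf - m g_k)² / g_k = α_k⁻¹ Var_{g_k}(φf/g_k)`; the support hypothesis makes the
integrand vanish where `g_k = 0`.
-/

theorem cov_eq_covariance {E : Type*} [MeasurableSpace E] (A B : E → ℝ) (ν : Measure E) :
    cov A B ν = covariance A B ν :=
  rfl

section OptimalControl

variable {Ω : Type*} [MeasurableSpace Ω] {ν : Measure Ω} [IsFiniteMeasure ν] {A B : Ω → ℝ}

theorem variance_sub_const_mul (hA : MemLp A 2 ν) (hB : MemLp B 2 ν) (c : ℝ) :
    variance (fun x => A x - c * B x) ν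
      = variance A ν - 2 * c * covariance A B ν + c ^ 2 * variance B ν := by
  rw [variance_fun_sub hA (hB.const_mul c), covariance_const_mul_right, variance_const_mul]
  ring

theorem variance_sub_optimal_mul_le (hA : MemLp A 2 ν) (hB : MemLp B 2 ν) (c : ℝ) :
    variance (fun x => A x - covariance A B ν / variance B ν * B x) ν
      ≤ variance (fun x => A x - c * B x) ν := by
  simp only [variance_sub_const_mul hA hB]
  rcases (variance_nonneg B ν).eq_or_lt with hV | hV
  · -- `x / 0 = 0` makes the coefficient `0`; then `c ↦ Var(A - cB) = Var A - 2c cov(A, B)`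
    -- is affine and nonnegative, so `cov(A, B) = 0`
    have hcov : covariance A B ν = 0 := by
      by_contra hC
      have hslope : 2 * ((variance A ν + 1) / (2 * covariance A B ν)) * covariance A B ν
          = variance A ν + 1 := by
        field_simp
      have := variance_nonneg (fun x => A x - (variance A ν + 1) / (2 * covariance A B ν) * B x) ν
      rw [variance_sub_const_mul hA hB, ← hV, hslope] at this
      linarith
    simp [← hV, hcov]
  · set β := covariance A B ν / variance B ν with hβ
    have hcov : covariance A B ν = β * variance B ν := by
      rw [hβ, div_mul_cancel₀ _ hV.ne']
    rw [hcov]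
    nlinarith [mul_nonneg hV.le (sq_nonneg (c - β))]

end OptimalControl

theorem mul_div_sub_sq (g h c : ℝ) : g * (h / g - c) ^ 2 = (h - c * g) ^ 2 / g := by
  rcases eq_or_ne g 0 with rfl | hg
  · simp
  · field_simp

theorem sq_div_le_inv_mul_sq_div {g g' h a : ℝ} (ha : 0 < a) (hg' : 0 ≤ g') (hle : a * g' ≤ g)
    (hsupp : g' = 0 → h = 0) : h ^ 2 / g ≤ a⁻¹ * (h ^ 2 / g') := by
  rcases hg'.eq_or_lt with hg'0 | hg'0
  · simp [hsupp hg'0.symm]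
  · calc h ^ 2 / g ≤ h ^ 2 / (a * g') := div_le_div_of_nonneg_left (sq_nonneg h) (by positivity) hle
      _ = a⁻¹ * (h ^ 2 / g') := by field_simp

section Density

variable {E : Type*} [MeasurableSpace E] {μ : Measure E} {g : E → ℝ}

theorem integral_den (hg0 : ∀ x, 0 ≤ g x) (hgm : AEMeasurable g μ) (F : E → ℝ) :
    ∫ x, F x ∂(den μ g) = ∫ x, g x * F x ∂μ := by
  rw [den, integral_withDensity_eq_integral_toReal_smul₀ hgm.ennreal_ofReal
    (.of_forall fun _ => ENNReal.ofReal_lt_top)]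
  simp only [ENNReal.toReal_ofReal (hg0 _), smul_eq_mul]

theorem integrable_den_iff (hg0 : ∀ x, 0 ≤ g x) (hgm : AEMeasurable g μ) (F : E → ℝ) :
    Integrable F (den μ g) ↔ Integrable (fun x => g x * F x) μ := by
  rw [den, integrable_withDensity_iff_integrable_smul₀' hgm.ennreal_ofReal
    (.of_forall fun _ => ENNReal.ofReal_lt_top)]
  simp only [ENNReal.toReal_ofReal (hg0 _), smul_eq_mul]

theorem isProbabilityMeasure_den (hg0 : ∀ x, 0 ≤ g x) (hg1 : ∫ x, g x ∂μ = 1) :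
    IsProbabilityMeasure (den μ g) := by
  have hg : Integrable g μ := .of_integral_ne_zero (by simp [hg1])
  constructor
  rw [den, withDensity_apply _ MeasurableSet.univ, Measure.restrict_univ,
    ← ofReal_integral_eq_lintegral_ofReal hg (.of_forall hg0), hg1, ENNReal.ofReal_one]

theorem integral_den_sq_div_sub (hg0 : ∀ x, 0 ≤ g x) (hgm : AEMeasurable g μ) (h : E → ℝ)
    (c : ℝ) : ∫ x, (h x / g x - c) ^ 2 ∂(den μ g) = ∫ x, (h x - c * g x) ^ 2 / g x ∂μ := by
  simp only [integral_den hg0 hgm, mul_div_sub_sq]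

theorem integral_den_sq_div (hg0 : ∀ x, 0 ≤ g x) (hgm : AEMeasurable g μ) (h : E → ℝ) :
    ∫ x, (h x / g x) ^ 2 ∂(den μ g) = ∫ x, h x ^ 2 / g x ∂μ := by
  simpa using integral_den_sq_div_sub hg0 hgm h 0

theorem variance_den_div (hg0 : ∀ x, 0 ≤ g x) (hgm : AEMeasurable g μ) {h : E → ℝ}
    (hX : AEMeasurable (fun x => h x / g x) (den μ g)) :
    variance (fun x => h x / g x) (den μ g)
      = ∫ x, (h x - (∫ y, h y / g y ∂(den μ g)) * g x) ^ 2 / g x ∂μ := by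
  rw [variance_eq_integral hX, integral_den_sq_div_sub hg0 hgm]

theorem integrable_sub_mul_sq_div_of_memLp_den [IsFiniteMeasure (den μ g)] (hg0 : ∀ x, 0 ≤ g x)
    (hgm : AEMeasurable g μ) {h : E → ℝ} (hX : MemLp (fun x => h x / g x) 2 (den μ g)) (c : ℝ) :
    Integrable (fun x => (h x - c * g x) ^ 2 / g x) μ := by
  have := (hX.sub (memLp_const c)).integrable_sq
  simpa only [integrable_den_iff hg0 hgm, Pi.sub_apply, mul_div_sub_sq] using this

theorem integral_sq_div_le_inv_mul {g' h : E → ℝ} {a : ℝ} (ha : 0 < a) (hg' : ∀ x, 0 ≤ g' x)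
    (hle : ∀ x, a * g' x ≤ g x) (hsupp : ∀ x, g' x = 0 → h x = 0)
    (hint : Integrable (fun x => h x ^ 2 / g' x) μ) :
    ∫ x, h x ^ 2 / g x ∂μ ≤ a⁻¹ * ∫ x, h x ^ 2 / g' x ∂μ := by
  rw [← integral_const_mul]
  refine integral_mono_of_nonneg (.of_forall fun x => ?_) (hint.const_mul _)
    (.of_forall fun x => sq_div_le_inv_mul_sq_div ha (hg' x) (hle x) (hsupp x))
  exact div_nonneg (sq_nonneg _) ((mul_nonneg ha.le (hg' x)).trans (hle x))

end Density

section Mixture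

variable {E ι : Type*} [Fintype ι] {α : ι → ℝ} {gs : ι → E → ℝ}

theorem mixture_nonneg (hα0 : ∀ i, 0 ≤ α i) (hgs0 : ∀ i x, 0 ≤ gs i x) (x : E) :
    0 ≤ ∑ i, α i * gs i x :=
  Finset.sum_nonneg fun i _ => mul_nonneg (hα0 i) (hgs0 i x)

theorem mul_le_mixture (hα0 : ∀ i, 0 ≤ α i) (hgs0 : ∀ i x, 0 ≤ gs i x) (k : ι) (x : E) :
    α k * gs k x ≤ ∑ i, α i * gs i x :=
  Finset.single_le_sum (f := fun i => α i * gs i x)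
    (fun i _ => mul_nonneg (hα0 i) (hgs0 i x)) (Finset.mem_univ k)

theorem integral_mixture [MeasurableSpace E] {μ : Measure E} (hgs1 : ∀ i, ∫ x, gs i x ∂μ = 1)
    (hα1 : ∑ i, α i = 1) :
    ∫ x, ∑ i, α i * gs i x ∂μ = 1 := by
  have hgs : ∀ i, Integrable (gs i) μ := fun i => .of_integral_ne_zero (by simp [hgs1])
  simp only [integral_finsetSum _ fun i _ => (hgs i).const_mul (α i), integral_const_mul, hgs1,
    mul_one, hα1]

end Mixture

theorem mixture_CV_variance_bound_general
    {E : Type*} [MeasurableSpace E] (μ : Measure E)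
    (f φ : E → ℝ) (K : ℕ) (gs : Fin K → E → ℝ) (α : Fin K → ℝ)
    (hgs0 : ∀ i x, 0 ≤ gs i x) (hgs1 : ∀ i, ∫ x, gs i x ∂μ = 1)
    (hsupp : ∀ i x, gs i x = 0 → φ x * f x = 0)
    (hα0 : ∀ i, 0 < α i) (hα1 : ∑ i, α i = 1)
    (k : Fin K)
    (hL2k : MemLp (fun x => φ x * f x / gs k x) 2 (den μ (gs k)))
    (hL2α : MemLp (fun x => φ x * f x / ∑ i, α i * gs i x) 2
      (den μ (fun x => ∑ i, α i * gs i x)))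
    (hL2c : MemLp (fun x => gs k x / ∑ i, α i * gs i x) 2
      (den μ (fun x => ∑ i, α i * gs i x))) :
    variance (fun x => (φ x * f x
        - (cov (fun y => φ y * f y / ∑ i, α i * gs i y)
              (fun y => gs k y / ∑ i, α i * gs i y)
              (den μ (fun y => ∑ i, α i * gs i y))
            / variance (fun y => gs k y / ∑ i, α i * gs i y)
              (den μ (fun y => ∑ i, α i * gs i y))) * gs k x)
        / ∑ i, α i * gs i x)
      (den μ (fun x => ∑ i, α i * gs i x))
    ≤ (α k)⁻¹ * variance (fun x => φ x * f x / gs k x) (den μ (gs k)) := by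
  have hgs : ∀ i, Integrable (gs i) μ := fun i => .of_integral_ne_zero (by simp [hgs1])
  set gα : E → ℝ := fun x => ∑ i, α i * gs i x
  have hgα0 : ∀ x, 0 ≤ gα x := mixture_nonneg (fun i => (hα0 i).le) hgs0
  have hgαm : AEMeasurable gα μ :=
    (integrable_finsetSum _ fun i _ => (hgs i).const_mul (α i)).aemeasurable
  have := isProbabilityMeasure_den hgα0 (integral_mixture hgs1 hα1)
  have := isProbabilityMeasure_den (hgs0 k) (hgs1 k)
  set m := ∫ x, φ x * f x / gs k x ∂(den μ (gs k))
  rw [cov_eq_covariance]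
  calc _ = variance (fun x => φ x * f x / gα x - _ * (gs k x / gα x)) (den μ gα) := by
        simp only [sub_div, mul_div_assoc]
        rfl
    _ ≤ variance (fun x => φ x * f x / gα x - m * (gs k x / gα x)) (den μ gα) :=
        variance_sub_optimal_mul_le hL2α hL2c m
    _ ≤ ∫ x, ((φ x * f x - m * gs k x) / gα x) ^ 2 ∂(den μ gα) := by
        refine (variance_le_expectation_sq (hL2α.sub (hL2c.const_mul m)).1).trans_eq ?_
        simp only [Pi.pow_apply, sub_div, mul_div_assoc]
        rfl
    _ = ∫ x, (φ x * f x - m * gs k x) ^ 2 / gα x ∂μ := integral_den_sq_div hgα0 hgαm _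
    _ ≤ (α k)⁻¹ * ∫ x, (φ x * f x - m * gs k x) ^ 2 / gs k x ∂μ :=
        integral_sq_div_le_inv_mul (hα0 k) (hgs0 k)
          (mul_le_mixture (fun i => (hα0 i).le) hgs0 k)
          (fun x hx => by simp [hx, hsupp k x hx])
          (integrable_sub_mul_sq_div_of_memLp_den (hgs0 k) (hgs k).1.aemeasurable hL2k m)
    _ = _ := by rw [variance_den_div (hgs0 k) (hgs k).1.aemeasurable hL2k.1.aemeasurable]

/-- For a mixture `g_α = Σ α_k g_k` with all `α_k > 0`, using component `g_k`
as control function with the optimal control parameter `β*`, the variance satisfies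
`Var_{g_α}([φf − β* g_k]/g_α) ≤ α_k⁻¹ Var_{g_k}(φf/g_k)`. -/
theorem mixture_CV_variance_bound
    {E : Type*} [MeasurableSpace E] (μ : Measure E)
    (f φ : E → ℝ) (K : ℕ) (gs : Fin K → E → ℝ) (α : Fin K → ℝ)
    (hf0 : ∀ x, 0 ≤ f x) (hf1 : ∫ x, f x ∂μ = 1)
    (hφ0 : ∀ x, 0 ≤ φ x)
    (hgs0 : ∀ i x, 0 ≤ gs i x) (hgs1 : ∀ i, ∫ x, gs i x ∂μ = 1)
    (hsupp : ∀ i x, gs i x = 0 → φ x * f x = 0)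
    (hα0 : ∀ i, 0 < α i) (hα1 : ∑ i, α i = 1)
    (k : Fin K)
    (hL2k : MemLp (fun x => φ x * f x / gs k x) 2 (den μ (gs k)))
    (hL2α : MemLp (fun x => φ x * f x / ∑ i, α i * gs i x) 2
      (den μ (fun x => ∑ i, α i * gs i x)))
    (hL2c : MemLp (fun x => gs k x / ∑ i, α i * gs i x) 2
      (den μ (fun x => ∑ i, α i * gs i x)))
    (hVarc : 0 < variance (fun x => gs k x / ∑ i, α i * gs i x)
      (den μ (fun x => ∑ i, α i * gs i x))) :
    variance (fun x => (φ x * f x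
        - (cov (fun y => φ y * f y / ∑ i, α i * gs i y)
              (fun y => gs k y / ∑ i, α i * gs i y)
              (den μ (fun y => ∑ i, α i * gs i y))
            / variance (fun y => gs k y / ∑ i, α i * gs i y)
              (den μ (fun y => ∑ i, α i * gs i y))) * gs k x)
        / ∑ i, α i * gs i x)
      (den μ (fun x => ∑ i, α i * gs i x))
    ≤ (α k)⁻¹ * variance (fun x => φ x * f x / gs k x) (den μ (gs k)) :=
  mixture_CV_variance_bound_general μ f φ K gs α hgs0 hgs1 hsupp hα0 hα1 k hL2k hL2α hL2c
end

section
/- The Pick-Freeze identity: for independent inputs, Var[E(φ(X)|X_i)] = E[φ(X)φ(X^i)] − (E[φ(X)])², where X^i = (X_i, X'_{−i}) and X'_{−i} is an independent copy of X_{−i}. Consequently the first-order Sobol' index satisfies S_i = (E[φ(X)φ(X^i)] − E[φ(X)]²)/(E[φ(X)²] − E[φ(X)]²). -/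
/-!
Write `A = Xᵢ` and `B`, `B'` for `X`, `X'` with coordinate `i` overwritten by `0`, so that
`φ(X) = G(A, B)` and `φ(Xⁱ) = G(A, B')` for `G (a, b) = φ (update b i a)`, with `A`, `B`, `B'`
independent and `B`, `B'` of the same law `κ`. Then `E[φ(X) | Xᵢ] = g(A)` for
`g a = ∫ G(a, b) dκ(b)`, and Fubini on `law A ⊗ κ ⊗ κ` factors the inner integral of
`G(a, b) G(a, b')` over `(b, b')` as `g(a)²`; hence `E[φ(X) φ(Xⁱ)] = E[g(A)²]`, while
`E[g(A)] = E[φ(X)]`.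
-/

open MeasureTheory ProbabilityTheory

section PickFreeze

variable {Ω α β : Type*} [MeasurableSpace Ω] [MeasurableSpace α] [MeasurableSpace β]
  {P : Measure Ω} [IsProbabilityMeasure P] {A : Ω → α} {B B' : Ω → β} {G : α × β → ℝ}

lemma ProbabilityTheory.IndepFun.condDistrib_ae_eq_const [StandardBorelSpace β] [Nonempty β]
    (hA : Measurable A) (hB : Measurable B) (hAB : IndepFun A B P) :
    condDistrib B A P =ᵐ[P.map A] Kernel.const α (P.map B) := by
  refine condDistrib_ae_eq_of_measure_eq_compProd A hB.aemeasurable ?_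
  rw [Measure.compProd_const]
  exact (indepFun_iff_map_prod_eq_prod_map_map hA.aemeasurable hB.aemeasurable).1 hAB

lemma condExp_comp_prodMk_ae_eq_integral_of_indepFun [StandardBorelSpace β] [Nonempty β]
    (hA : Measurable A) (hB : Measurable B) (hAB : IndepFun A B P) (hG : StronglyMeasurable G)
    (hint : Integrable (fun ω => G (A ω, B ω)) P) :
    P[fun ω => G (A ω, B ω) | MeasurableSpace.comap A inferInstance]
      =ᵐ[P] fun ω => ∫ b, G (A ω, b) ∂(P.map B) := by
  filter_upwards [condExp_prod_ae_eq_integral_condDistrib hA hB.aemeasurable hG hint,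
    ae_of_ae_map hA.aemeasurable (hAB.condDistrib_ae_eq_const hA hB)] with ω hcond hconst
  rw [hcond, hconst, Kernel.const_apply]

lemma integral_prod_prod_mul_eq_integral_sq {ν : Measure α} {κ : Measure β} [SFinite ν]
    [SFinite κ] (hint : Integrable (fun q : α × β × β => G (q.1, q.2.1) * G (q.1, q.2.2))
      (ν.prod (κ.prod κ))) :
    ∫ q, G (q.1, q.2.1) * G (q.1, q.2.2) ∂(ν.prod (κ.prod κ))
      = ∫ a, (∫ b, G (a, b) ∂κ) ^ 2 ∂ν := by
  rw [integral_prod _ hint]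
  congr 1 with a
  exact (integral_prod_mul (fun b => G (a, b)) (fun b => G (a, b))).trans (sq _).symm

lemma map_prodMk_prodMk_eq_prod (hA : Measurable A) (hB : Measurable B) (hB' : Measurable B')
    (hAB : IndepFun A B P) (hABB' : IndepFun (fun ω => (A ω, B ω)) B' P) :
    P.map (fun ω => (A ω, B ω, B' ω)) = (P.map A).prod ((P.map B).prod (P.map B')) := by
  have hassoc : (fun ω => (A ω, B ω, B' ω))
      = MeasurableEquiv.prodAssoc ∘ fun ω => ((A ω, B ω), B' ω) := rfl
  rw [hassoc, ← Measure.map_map MeasurableEquiv.prodAssoc.measurable ((hA.prodMk hB).prodMk hB'),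
    (indepFun_iff_map_prod_eq_prod_map_map (hA.prodMk hB).aemeasurable hB'.aemeasurable).1 hABB',
    (indepFun_iff_map_prod_eq_prod_map_map hA.aemeasurable hB.aemeasurable).1 hAB,
    Measure.prodAssoc_prod]

lemma integral_mul_comp_prodMk_eq_integral_sq (hA : Measurable A) (hB : Measurable B)
    (hB' : Measurable B') (hG : Measurable G) (hAB : IndepFun A B P)
    (hABB' : IndepFun (fun ω => (A ω, B ω)) B' P) (hlaw : P.map B' = P.map B)
    (hY : MemLp (fun ω => G (A ω, B ω)) 2 P) :
    ∫ ω, G (A ω, B ω) * G (A ω, B' ω) ∂P = ∫ a, (∫ b, G (a, b) ∂(P.map B)) ^ 2 ∂(P.map A) := by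
  have hAB' : IndepFun A B' P := hABB'.comp measurable_fst measurable_id
  have hident : IdentDistrib (fun ω => (A ω, B ω)) (fun ω => (A ω, B' ω)) P P := by
    refine ⟨by fun_prop, by fun_prop, ?_⟩
    rw [(indepFun_iff_map_prod_eq_prod_map_map hA.aemeasurable hB.aemeasurable).1 hAB,
      (indepFun_iff_map_prod_eq_prod_map_map hA.aemeasurable hB'.aemeasurable).1 hAB', hlaw]
  have hY' : MemLp (fun ω => G (A ω, B' ω)) 2 P := (hident.comp hG).memLp_snd hY
  have hT : Measurable fun ω => (A ω, B ω, B' ω) := by fun_prop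
  have hF : AEStronglyMeasurable (fun q : α × β × β => G (q.1, q.2.1) * G (q.1, q.2.2))
      (P.map fun ω => (A ω, B ω, B' ω)) := by fun_prop
  have hlaw₃ : P.map (fun ω => (A ω, B ω, B' ω)) = (P.map A).prod ((P.map B).prod (P.map B)) :=
    hlaw ▸ map_prodMk_prodMk_eq_prod hA hB hB' hAB hABB'
  have hint : Integrable (fun q : α × β × β => G (q.1, q.2.1) * G (q.1, q.2.2))
      ((P.map A).prod ((P.map B).prod (P.map B))) := by
    rw [← hlaw₃, integrable_map_measure hF hT.aemeasurable]
    exact hY.integrable_mul hY'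
  rw [← integral_prod_prod_mul_eq_integral_sq hint, ← hlaw₃, integral_map hT.aemeasurable hF]

lemma variance_condExp_eq_integral_mul_sub_sq [StandardBorelSpace β] [Nonempty β]
    (hA : Measurable A) (hB : Measurable B) (hB' : Measurable B') (hG : Measurable G)
    (hAB : IndepFun A B P) (hABB' : IndepFun (fun ω => (A ω, B ω)) B' P)
    (hlaw : P.map B' = P.map B) (hY : MemLp (fun ω => G (A ω, B ω)) 2 P) :
    variance (P[fun ω => G (A ω, B ω) | MeasurableSpace.comap A inferInstance]) P
      = (∫ ω, G (A ω, B ω) * G (A ω, B' ω) ∂P) - (∫ ω, G (A ω, B ω) ∂P) ^ 2 := by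
  have hZ := condExp_comp_prodMk_ae_eq_integral_of_indepFun hA hB hAB hG.stronglyMeasurable
    (hY.integrable one_le_two)
  have hg : StronglyMeasurable fun a => ∫ b, G (a, b) ∂(P.map B) :=
    hG.stronglyMeasurable.integral_prod_right'
  rw [variance_eq_sub (hY.condExp one_le_two), integral_condExp hA.comap_le,
    integral_mul_comp_prodMk_eq_integral_sq hA hB hB' hG hAB hABB' hlaw hY]
  congr 1
  rw [integral_congr_ae (hZ.pow_const 2)]
  exact (integral_map hA.aemeasurable (hg.pow 2).aestronglyMeasurable).symm

end PickFreeze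

lemma ProbabilityTheory.iIndepFun.indepFun_apply_update {Ω ι γ : Type*} [MeasurableSpace Ω]
    [MeasurableSpace γ] [Fintype ι] [DecidableEq ι] {P : Measure Ω} {X : Ω → ι → γ}
    (hX : Measurable X) (h : iIndepFun (fun j ω => X ω j) P) (i : ι) (c : γ) :
    IndepFun (fun ω => X ω i) (fun ω => Function.update (X ω) i c) P := by
  have hsplit := h.indepFun_finset {i} {i}ᶜ disjoint_compl_right
    (fun j => (measurable_pi_apply j).comp hX)
  have hupdate : (fun ω => Function.update (X ω) i c)
      = (fun v => Function.updateFinset (fun _ => c) {i}ᶜ v) ∘ fun ω j => X ω j := by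
    funext ω j
    by_cases hj : j = i <;> simp [Function.updateFinset_def, hj]
  rw [hupdate]
  exact hsplit.comp (ψ := fun v => Function.updateFinset (fun _ => c) {i}ᶜ v)
    (measurable_pi_apply ⟨i, Finset.mem_singleton_self i⟩) (by fun_prop)

theorem pick_freeze_identity_general
    {Ω : Type*} [MeasurableSpace Ω] (P : Measure Ω) [IsProbabilityMeasure P]
    (d : ℕ) (X X' : Ω → (Fin d → ℝ)) (φ : (Fin d → ℝ) → ℝ)
    (hφm : Measurable φ)
    (hXm : Measurable X) (hX'm : Measurable X')
    (hlaw : Measure.map X' P = Measure.map X P)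
    (hindep : IndepFun X X' P)
    (hcomp : iIndepFun (fun i ω => X ω i) P)
    (hL2 : MemLp (fun ω => φ (X ω)) 2 P)
    (i : Fin d) :
    variance (P[(fun ω => φ (X ω)) |
        MeasurableSpace.comap (fun ω => X ω i) inferInstance]) P
      = (∫ ω, φ (X ω) * φ (fun j => if j = i then X ω i else X' ω j) ∂P)
        - (∫ ω, φ (X ω) ∂P) ^ 2 ∧
    variance (P[(fun ω => φ (X ω)) |
        MeasurableSpace.comap (fun ω => X ω i) inferInstance]) P
      / variance (fun ω => φ (X ω)) P
      = ((∫ ω, φ (X ω) * φ (fun j => if j = i then X ω i else X' ω j) ∂P)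
          - (∫ ω, φ (X ω) ∂P) ^ 2)
        / ((∫ ω, φ (X ω) ^ 2 ∂P) - (∫ ω, φ (X ω) ∂P) ^ 2) := by
  have hAB : IndepFun (fun ω => X ω i) (fun ω => Function.update (X ω) i 0) P :=
    hcomp.indepFun_apply_update hXm i 0
  have hABB' : IndepFun (fun ω => (X ω i, Function.update (X ω) i 0))
      (fun ω => Function.update (X' ω) i 0) P :=
    hindep.comp (φ := fun x => (x i, Function.update x i 0))
      (ψ := fun x => Function.update x i 0) (by fun_prop) (by fun_prop)
  have hlaw' : P.map (fun ω => Function.update (X' ω) i 0)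
      = P.map (fun ω => Function.update (X ω) i 0) := by
    have h := congrArg (Measure.map fun x => Function.update x i 0) hlaw
    rwa [Measure.map_map (by fun_prop) hX'm, Measure.map_map (by fun_prop) hXm] at h
  have hpick := variance_condExp_eq_integral_mul_sub_sq
    (G := fun p => φ (Function.update p.2 i p.1)) (by fun_prop) (by fun_prop) (by fun_prop)
    (by fun_prop) hAB hABB' hlaw' (by simpa using hL2)
  have hfreeze : ∀ ω,
      Function.update (X' ω) i (X ω i) = fun j => if j = i then X ω i else X' ω j :=
    fun ω => funext fun j => Function.update_apply _ _ _ _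
  simp only [Function.update_idem, Function.update_eq_self, hfreeze] at hpick
  refine ⟨hpick, ?_⟩
  rw [hpick, variance_eq_sub hL2]
  rfl

/-- The Pick-Freeze identity: with independent inputs,
`Var[E(φ(X)|X_i)] = E[φ(X)φ(X^i)] − (E[φ(X)])²`, where `X^i` agrees with `X` in
coordinate `i` and with the independent copy `X'` elsewhere; consequently the first-order
Sobol' index satisfies `S_i = (E[φ(X)φ(X^i)] − E[φ(X)]²)/(E[φ(X)²] − E[φ(X)]²)`. -/
theorem pick_freeze_identity
    {Ω : Type*} [MeasurableSpace Ω] (P : Measure Ω) [IsProbabilityMeasure P]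
    (d : ℕ) (X X' : Ω → (Fin d → ℝ)) (φ : (Fin d → ℝ) → ℝ)
    (hφm : Measurable φ)
    (hXm : Measurable X) (hX'm : Measurable X')
    (hlaw : Measure.map X' P = Measure.map X P)
    (hindep : IndepFun X X' P)
    (hcomp : iIndepFun (fun i ω => X ω i) P)
    (hL2 : MemLp (fun ω => φ (X ω)) 2 P)
    (hVar : 0 < variance (fun ω => φ (X ω)) P)
    (i : Fin d) :
    variance (P[(fun ω => φ (X ω)) |
        MeasurableSpace.comap (fun ω => X ω i) inferInstance]) P
      = (∫ ω, φ (X ω) * φ (fun j => if j = i then X ω i else X' ω j) ∂P)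
        - (∫ ω, φ (X ω) ∂P) ^ 2 ∧
    variance (P[(fun ω => φ (X ω)) |
        MeasurableSpace.comap (fun ω => X ω i) inferInstance]) P
      / variance (fun ω => φ (X ω)) P
      = ((∫ ω, φ (X ω) * φ (fun j => if j = i then X ω i else X' ω j) ∂P)
          - (∫ ω, φ (X ω) ∂P) ^ 2)
        / ((∫ ω, φ (X ω) ^ 2 ∂P) - (∫ ω, φ (X ω) ∂P) ^ 2) :=
  pick_freeze_identity_general P d X X' φ hφm hXm hX'm hlaw hindep hcomp hL2 i
end
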